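/- arXiv:1302.5935 — 7 statements merged into one kernel-verified Lean document; each statement's English description precedes it below -/
import Mathlib

section
/- Let μ and δ be real numbers with |δ| < μ. Then for every t ∈ ℝ, (1/(2π)) ∫_ℝ e^{iEt}/((E + iδ)² + μ²) dE = e^{−|t|μ + tδ}/(2μ), where the integrand is a complex-valued function of the real variable E and the integral converges. -/
/-!
For `|Re z| < μ` the two-sided exponential `f(v) = exp (-|v| μ + v z)` is integrable, and
splitting at `0` gives `∫ f = 1/(μ - z) + 1/(μ + z) = 2μ/(μ² - z²)`. With `z = δ - 2πiw` this is
the Fourier transform `𝓕 f(w) = 2μ/((2πw + iδ)² + μ²)` of `f` for `z = δ`, an integrable function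
of `w`. Fourier inversion at `t`, after the substitution `E = 2πw`, then reads
`f(t) = (2π)⁻¹ · 2μ · ∫ e^{iEt}/((E + iδ)² + μ²) dE`.
-/

open MeasureTheory Real Set FourierTransform
open Complex (I)

noncomputable def twoSidedExp (μ : ℝ) (z : ℂ) (v : ℝ) : ℂ :=
  Complex.exp (-|v| * μ + v * z)

section TwoSidedExp

variable {μ : ℝ} {z : ℂ}

theorem continuous_twoSidedExp : Continuous (twoSidedExp μ z) := by
  unfold twoSidedExp
  fun_prop

theorem eqOn_twoSidedExp_Ioi :
    EqOn (twoSidedExp μ z) (fun v : ℝ => Complex.exp ((z - μ) * v)) (Ioi 0) := by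
  intro v hv
  rw [twoSidedExp, abs_of_pos (mem_Ioi.mp hv)]
  push_cast
  ring_nf

theorem eqOn_twoSidedExp_Iic :
    EqOn (twoSidedExp μ z) (fun v : ℝ => Complex.exp ((z + μ) * v)) (Iic 0) := by
  intro v hv
  rw [twoSidedExp, abs_of_nonpos (mem_Iic.mp hv)]
  push_cast
  ring_nf

theorem re_sub_lt_zero_of_abs_re_lt (h : |z.re| < μ) : (z - μ).re < 0 := by
  simpa using (abs_lt.mp h).2

theorem re_add_pos_of_abs_re_lt (h : |z.re| < μ) : 0 < (z + μ).re := by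
  simpa [neg_lt_iff_pos_add] using (abs_lt.mp h).1

theorem integrableOn_twoSidedExp_Ioi (h : |z.re| < μ) : IntegrableOn (twoSidedExp μ z) (Ioi 0) :=
  (integrableOn_exp_mul_complex_Ioi (re_sub_lt_zero_of_abs_re_lt h) 0).congr_fun
    eqOn_twoSidedExp_Ioi.symm measurableSet_Ioi

theorem integrableOn_twoSidedExp_Iic (h : |z.re| < μ) : IntegrableOn (twoSidedExp μ z) (Iic 0) :=
  (integrableOn_exp_mul_complex_Iic (re_add_pos_of_abs_re_lt h) 0).congr_fun
    eqOn_twoSidedExp_Iic.symm measurableSet_Iic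

theorem integrable_twoSidedExp (h : |z.re| < μ) : Integrable (twoSidedExp μ z) := by
  rw [← integrableOn_univ, ← Iic_union_Ioi (a := (0 : ℝ))]
  exact (integrableOn_twoSidedExp_Iic h).union (integrableOn_twoSidedExp_Ioi h)

theorem integral_twoSidedExp (h : |z.re| < μ) :
    ∫ v, twoSidedExp μ z v = 2 * μ / (μ ^ 2 - z ^ 2) := by
  have hsub : z - μ ≠ 0 := fun h0 => by simpa [h0] using re_sub_lt_zero_of_abs_re_lt h
  have hadd : z + μ ≠ 0 := fun h0 => by simpa [h0] using re_add_pos_of_abs_re_lt h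
  rw [← intervalIntegral.integral_Iic_add_Ioi (integrableOn_twoSidedExp_Iic h)
      (integrableOn_twoSidedExp_Ioi h),
    setIntegral_congr_fun measurableSet_Iic eqOn_twoSidedExp_Iic,
    setIntegral_congr_fun measurableSet_Ioi eqOn_twoSidedExp_Ioi,
    integral_exp_mul_complex_Iic (re_add_pos_of_abs_re_lt h),
    integral_exp_mul_complex_Ioi (re_sub_lt_zero_of_abs_re_lt h)]
  simp only [Complex.ofReal_zero, mul_zero, Complex.exp_zero]
  rw [show (μ : ℂ) ^ 2 - z ^ 2 = -((z - μ) * (z + μ)) by ring]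
  field_simp
  ring

theorem fourier_twoSidedExp (h : |z.re| < μ) (w : ℝ) :
    𝓕 (twoSidedExp μ z) w = 2 * μ / (μ ^ 2 - (z - 2 * π * w * I) ^ 2) := by
  rw [Real.fourier_real_eq_integral_exp_smul, ← integral_twoSidedExp (z := z - 2 * π * w * I)
    (by simpa using h)]
  congr 1 with v
  rw [smul_eq_mul, twoSidedExp, twoSidedExp, ← Complex.exp_add]
  push_cast
  ring_nf

end TwoSidedExp

theorem sq_add_sub_sq_le_norm (x δ μ : ℝ) :
    x ^ 2 + (μ ^ 2 - δ ^ 2) ≤ ‖((x : ℂ) + I * δ) ^ 2 + (μ : ℂ) ^ 2‖ := by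
  refine le_trans (le_of_eq ?_) (Complex.re_le_norm _)
  simp [sq]
  ring

theorem integrable_inv_sq_add {c : ℝ} (hc : 0 < c) : Integrable fun x : ℝ => (x ^ 2 + c)⁻¹ := by
  have hs : Real.sqrt c ≠ 0 := (Real.sqrt_pos.mpr hc).ne'
  refine ((integrable_inv_one_add_sq.comp_mul_left' (inv_ne_zero hs)).const_mul c⁻¹).congr
    (Filter.Eventually.of_forall fun x => ?_)
  simp only [mul_pow, inv_pow, Real.sq_sqrt hc.le]
  field_simp
  ring

theorem integrable_inv_sq_add_I_mul_sq_add_sq {δ μ : ℝ} (hδ : |δ| < μ) :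
    Integrable fun x : ℝ => (((x : ℂ) + I * δ) ^ 2 + (μ : ℂ) ^ 2)⁻¹ := by
  have hc : 0 < μ ^ 2 - δ ^ 2 := by
    rw [sub_pos, ← sq_abs δ]
    exact pow_lt_pow_left₀ hδ (abs_nonneg δ) two_ne_zero
  have hbound (x : ℝ) := sq_add_sub_sq_le_norm x δ μ
  have hne (x : ℝ) : ((x : ℂ) + I * δ) ^ 2 + (μ : ℂ) ^ 2 ≠ 0 :=
    norm_pos_iff.mp ((by positivity : 0 < x ^ 2 + (μ ^ 2 - δ ^ 2)).trans_le (hbound x))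
  refine (integrable_inv_sq_add hc).mono' (Continuous.aestronglyMeasurable ?_)
    (Filter.Eventually.of_forall fun x => ?_)
  · exact (by fun_prop : Continuous fun x : ℝ => ((x : ℂ) + I * δ) ^ 2 + (μ : ℂ) ^ 2).inv₀ hne
  · rw [norm_inv]
    exact inv_anti₀ (by positivity) (hbound x)

theorem fourierInv_comp_two_pi_mul {F : Type*} [NormedAddCommGroup F] [NormedSpace ℂ F]
    (g : ℝ → F) (t : ℝ) :
    𝓕⁻ (fun w => g (2 * π * w)) t = (2 * π)⁻¹ • ∫ E : ℝ, Complex.exp (I * E * t) • g E := by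
  rw [Real.fourierInv_eq_fourier_neg, Real.fourier_real_eq_integral_exp_smul,
    ← abs_of_pos (inv_pos.mpr Real.two_pi_pos), ← Measure.integral_comp_mul_left]
  congr 1 with w
  push_cast
  ring_nf

/-- For real `μ, δ` with `|δ| < μ` and any `t ∈ ℝ`, the complex integral
`(1/(2π)) ∫_ℝ e^{iEt}/((E + iδ)² + μ²) dE` converges and equals `e^{−|t|μ + tδ}/(2μ)`. -/
theorem stmt0 (μ δ : ℝ) (hδ : |δ| < μ) (t : ℝ) :
    Integrable (fun E : ℝ =>
      Complex.exp (Complex.I * E * t) / (((E : ℂ) + Complex.I * δ) ^ 2 + (μ : ℂ) ^ 2)) ∧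
    (1 / (2 * (π : ℂ))) *
        ∫ E : ℝ, Complex.exp (Complex.I * E * t) / (((E : ℂ) + Complex.I * δ) ^ 2 + (μ : ℂ) ^ 2)
      = ((Real.exp (-|t| * μ + t * δ) / (2 * μ) : ℝ) : ℂ) := by
  have hre : |(δ : ℂ).re| < μ := by simpa using hδ
  have hD := integrable_inv_sq_add_I_mul_sq_add_sq hδ
  refine ⟨?_, ?_⟩
  · simp_rw [div_eq_mul_inv]
    refine hD.bdd_mul (c := 1) (by fun_prop) (Filter.Eventually.of_forall fun E => ?_)
    simp [Complex.norm_exp]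
  have hF : 𝓕 (twoSidedExp μ δ) =
      fun w => 2 * (μ : ℂ) * ((((2 * π * w : ℝ) : ℂ) + I * δ) ^ 2 + (μ : ℂ) ^ 2)⁻¹ := by
    ext w
    rw [fourier_twoSidedExp hre, div_eq_mul_inv]
    congr 2
    push_cast
    linear_combination (-((2 * π * w : ℂ) ^ 2 + (δ : ℂ) ^ 2)) * Complex.I_sq
  have hinv := (integrable_twoSidedExp hre).fourierInv_fourier_eq
    (hF ▸ (hD.comp_mul_left' Real.two_pi_pos.ne').const_mul _)
    continuous_twoSidedExp.continuousAt (v := t)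
  rw [hF, fourierInv_comp_two_pi_mul
    (fun x : ℝ => 2 * (μ : ℂ) * (((x : ℂ) + I * δ) ^ 2 + (μ : ℂ) ^ 2)⁻¹)] at hinv
  simp_rw [smul_eq_mul, mul_left_comm _ (2 * (μ : ℂ)), ← div_eq_mul_inv] at hinv
  rw [integral_const_mul, Complex.real_smul, twoSidedExp] at hinv
  have h2μ : 2 * (μ : ℂ) ≠ 0 := by
    exact_mod_cast (mul_pos two_pos ((abs_nonneg δ).trans_lt hδ)).ne'
  push_cast at hinv ⊢
  rw [← hinv, mul_div_assoc, mul_div_cancel_left₀ _ h2μ, one_div]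
end

section
/- Let n ≥ 1, m > 0, and v ∈ ℝⁿ with ‖v‖ < 1. For every (E,k) ∈ ℝ × ℝⁿ one has the identity D̃(E,k) = ((E² + μ(k)² − δ(k)²) − 2iEδ(k)) / ((E² + (μ(k) − δ(k))²)(E² + (μ(k) + δ(k))²)), the denominator is strictly positive, and consequently the real part K̃(E,k) = (E² + μ(k)² − δ(k)²)/((E² + (μ(k) − δ(k))²)(E² + (μ(k) + δ(k))²)) is strictly positive. -/
/-!
With `z = (E + iδ)² + μ²` one has `1 / z = conj z / |z|²`, and `|z|²` factors as
`(E² + (μ − δ)²)(E² + (μ + δ)²)`. Cauchy–Schwarz gives `|δ| ≤ ‖k‖ ‖v‖ ≤ ‖k‖ < μ`, which makes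
both factors and `Re z = E² + μ² − δ²` positive.
-/

open Real
open scoped RealInnerProductSpace

noncomputable section

/-- One-particle energy `μ(k) = √(‖k‖² + m²)`. -/
def mu {n : ℕ} (m : ℝ) (k : EuclideanSpace ℝ (Fin n)) : ℝ := Real.sqrt (‖k‖ ^ 2 + m ^ 2)

/-- `δ(k) = ⟨k, v⟩`. -/
def del {n : ℕ} (v k : EuclideanSpace ℝ (Fin n)) : ℝ := ⟪k, v⟫

/-- Fourier symbol of the complex covariance: `D̃(E,k) = 1/((E + iδ(k))² + μ(k)²)`. -/
def Dtil {n : ℕ} (m : ℝ) (v : EuclideanSpace ℝ (Fin n)) (E : ℝ)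
    (k : EuclideanSpace ℝ (Fin n)) : ℂ :=
  1 / (((E : ℂ) + Complex.I * (del v k : ℝ)) ^ 2 + (mu m k : ℂ) ^ 2)

lemma abs_del_lt_mu {n : ℕ} {m : ℝ} (hm : m ≠ 0) {v : EuclideanSpace ℝ (Fin n)} (hv : ‖v‖ ≤ 1)
    (k : EuclideanSpace ℝ (Fin n)) : |del v k| < mu m k :=
  calc |del v k| ≤ ‖k‖ * ‖v‖ := abs_real_inner_le_norm k v
    _ ≤ ‖k‖ := mul_le_of_le_one_right (norm_nonneg k) hv
    _ < mu m k := by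
      rw [mu, Real.lt_sqrt (norm_nonneg k)]
      have : 0 < m ^ 2 := by positivity
      linarith

namespace Complex

/-- `|z|²` factorizes since `(E² + u² − d²)² + (2Ed)² = (E² + u² + d²)² − (2ud)²`. -/
lemma normSq_ofReal_add_I_mul_sq_add_sq (E d u : ℝ) :
    normSq (((E : ℂ) + I * d) ^ 2 + (u : ℂ) ^ 2) =
      (E ^ 2 + (u - d) ^ 2) * (E ^ 2 + (u + d) ^ 2) := by
  simp only [normSq_apply, pow_two, add_re, add_im, mul_re, mul_im, ofReal_re, ofReal_im,
    I_re, I_im]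
  ring

lemma one_div_ofReal_add_I_mul_sq_add_sq (E d u : ℝ) :
    1 / (((E : ℂ) + I * d) ^ 2 + (u : ℂ) ^ 2) =
      (((E ^ 2 + u ^ 2 - d ^ 2 : ℝ) : ℂ) - 2 * I * E * d) /
        (((E ^ 2 + (u - d) ^ 2) * (E ^ 2 + (u + d) ^ 2) : ℝ) : ℂ) := by
  rw [one_div, inv_def, ← normSq_ofReal_add_I_mul_sq_add_sq, div_eq_mul_inv, ofReal_inv]
  congr 1
  apply Complex.ext <;>
    simp only [pow_two, map_add, map_mul, conj_ofReal, conj_I, add_re, add_im, mul_re, mul_im,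
      sub_re, sub_im, ofReal_re, ofReal_im, I_re, I_im, neg_re, neg_im, re_ofNat, im_ofNat] <;>
    ring

end Complex

lemma sq_add_sub_sq_mul_sq_add_add_sq_pos {E d u : ℝ} (h : |d| < u) :
    0 < (E ^ 2 + (u - d) ^ 2) * (E ^ 2 + (u + d) ^ 2) := by
  obtain ⟨hneg, hpos⟩ := abs_lt.mp h
  have : 0 < u - d := by linarith
  have : 0 < u + d := by linarith
  positivity

lemma re_one_div_ofReal_add_I_mul_sq_add_sq_pos (E : ℝ) {d u : ℝ} (h : |d| < u) :
    0 < (1 / (((E : ℂ) + Complex.I * d) ^ 2 + (u : ℂ) ^ 2)).re := by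
  rw [Complex.one_div_ofReal_add_I_mul_sq_add_sq, Complex.div_ofReal_re]
  have hnum : 0 < E ^ 2 + u ^ 2 - d ^ 2 := by
    have := sq_lt_sq' (abs_lt.mp h).1 (abs_lt.mp h).2
    nlinarith [sq_nonneg E]
  have hre : (2 * Complex.I * E * d).re = 0 := by simp
  rw [Complex.sub_re, Complex.ofReal_re, hre, sub_zero]
  exact div_pos hnum (sq_add_sub_sq_mul_sq_add_add_sq_pos h)

theorem stmt2_general (n : ℕ) (m : ℝ) (hm : 0 < m)
    (v : EuclideanSpace ℝ (Fin n)) (hv : ‖v‖ < 1)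
    (E : ℝ) (k : EuclideanSpace ℝ (Fin n)) :
    Dtil m v E k =
      (((E ^ 2 + mu m k ^ 2 - del v k ^ 2 : ℝ) : ℂ) - 2 * Complex.I * E * (del v k : ℝ)) /
        (((E ^ 2 + (mu m k - del v k) ^ 2) * (E ^ 2 + (mu m k + del v k) ^ 2) : ℝ) : ℂ) ∧
    0 < (E ^ 2 + (mu m k - del v k) ^ 2) * (E ^ 2 + (mu m k + del v k) ^ 2) ∧
    0 < (Dtil m v E k).re := by
  have hdu : |del v k| < mu m k := abs_del_lt_mu hm.ne' hv.le k
  exact ⟨Complex.one_div_ofReal_add_I_mul_sq_add_sq E _ _,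
    sq_add_sub_sq_mul_sq_add_add_sq_pos hdu, re_one_div_ofReal_add_I_mul_sq_add_sq_pos E hdu⟩

/-- The identity
`D̃(E,k) = ((E² + μ² − δ²) − 2iEδ) / ((E² + (μ−δ)²)(E² + (μ+δ)²))`, positivity of the
denominator, and strict positivity of the real part `K̃(E,k)`. -/
theorem stmt2 (n : ℕ) (hn : 1 ≤ n) (m : ℝ) (hm : 0 < m)
    (v : EuclideanSpace ℝ (Fin n)) (hv : ‖v‖ < 1)
    (E : ℝ) (k : EuclideanSpace ℝ (Fin n)) :
    Dtil m v E k =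
      (((E ^ 2 + mu m k ^ 2 - del v k ^ 2 : ℝ) : ℂ) - 2 * Complex.I * E * (del v k : ℝ)) /
        (((E ^ 2 + (mu m k - del v k) ^ 2) * (E ^ 2 + (mu m k + del v k) ^ 2) : ℝ) : ℂ) ∧
    0 < (E ^ 2 + (mu m k - del v k) ^ 2) * (E ^ 2 + (mu m k + del v k) ^ 2) ∧
    0 < (Dtil m v E k).re :=
  stmt2_general n m hm v hv E k

end
end

section
/- Let n ≥ 1, m > 0, and v ∈ ℝⁿ with ‖v‖ < 1. For every (E,k) ∈ ℝ × ℝⁿ, K̃(E,k) ≤ |D̃(E,k)| ≤ (1 − ‖v‖²)^{−1/2} · K̃(E,k). -/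
open Real
open scoped RealInnerProductSpace

noncomputable section

/-- Real part `K̃(E,k) = Re D̃(E,k)`. -/
def Ktil {n : ℕ} (m : ℝ) (v : EuclideanSpace ℝ (Fin n)) (E : ℝ)
    (k : EuclideanSpace ℝ (Fin n)) : ℝ := (Dtil m v E k).re

/-!
`D̃ = w⁻¹` with `w = (E + iδ)² + μ²`, so `Re w = E² - δ² + μ²` and `Im w = 2Eδ`. Since
`|δ| ≤ ‖v‖ μ`, the AM-GM inequality `4 t E² μ² ≤ (E² + t μ²)²` with `t = 1 - ‖v‖²` gives
`t (Im w)² ≤ ‖v‖² (Re w)²`, i.e. `√t ‖w‖ ≤ Re w`: the argument of `w` stays in a sector of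
half-angle `arccos √t`. For such `w`, `Re w⁻¹ = Re w / ‖w‖² ≥ √t ‖w⁻¹‖`.
-/

namespace Complex

theorem sqrt_mul_norm_le_re {z : ℂ} {t : ℝ} (ht : 0 ≤ t) (hre : 0 ≤ z.re)
    (h : t * z.im ^ 2 ≤ (1 - t) * z.re ^ 2) : √t * ‖z‖ ≤ z.re := by
  have hsq : t * ‖z‖ ^ 2 ≤ z.re ^ 2 := by
    rw [Complex.sq_norm, normSq_apply]
    nlinarith
  calc √t * ‖z‖ = √(t * ‖z‖ ^ 2) := by rw [Real.sqrt_mul ht, Real.sqrt_sq (norm_nonneg z)]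
    _ ≤ √(z.re ^ 2) := Real.sqrt_le_sqrt hsq
    _ = z.re := Real.sqrt_sq hre

theorem norm_inv_le_inv_mul_re_inv {z : ℂ} {c : ℝ} (hc : 0 < c) (h : c * ‖z‖ ≤ z.re) :
    ‖z⁻¹‖ ≤ c⁻¹ * z⁻¹.re := by
  rcases eq_or_ne z 0 with rfl | hz
  · simp
  have hnorm : 0 < ‖z‖ := norm_pos_iff.mpr hz
  rw [inv_re, ← Complex.sq_norm, norm_inv, le_inv_mul_iff₀ hc]
  calc c * ‖z‖⁻¹ = c * ‖z‖ / ‖z‖ ^ 2 := by field_simp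
    _ ≤ z.re / ‖z‖ ^ 2 := by gcongr

theorem re_ofReal_add_I_mul_sq_add_sq (E δ μ : ℝ) :
    (((E : ℂ) + I * δ) ^ 2 + (μ : ℂ) ^ 2).re = E ^ 2 - δ ^ 2 + μ ^ 2 := by
  simp [sq]

theorem im_ofReal_add_I_mul_sq_add_sq (E δ μ : ℝ) :
    (((E : ℂ) + I * δ) ^ 2 + (μ : ℂ) ^ 2).im = 2 * E * δ := by
  simp only [sq, add_im, mul_im, add_re, ofReal_re, mul_re, I_re, zero_mul, I_im, ofReal_im,
    mul_zero, sub_self, add_zero, one_mul, zero_add]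
  ring

end Complex

section Elementary

variable {E δ μ s : ℝ}

theorem sq_sub_sq_add_sq_nonneg (hs : s ^ 2 ≤ 1) (hδ : δ ^ 2 ≤ s ^ 2 * μ ^ 2) :
    0 ≤ E ^ 2 - δ ^ 2 + μ ^ 2 := by
  nlinarith [sq_nonneg E, sq_nonneg μ]

theorem one_sub_sq_mul_sq_le (hs : s ^ 2 ≤ 1) (hδ : δ ^ 2 ≤ s ^ 2 * μ ^ 2) :
    (1 - s ^ 2) * (2 * E * δ) ^ 2 ≤ s ^ 2 * (E ^ 2 - δ ^ 2 + μ ^ 2) ^ 2 := by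
  have ht : 0 ≤ 1 - s ^ 2 := sub_nonneg.mpr hs
  calc (1 - s ^ 2) * (2 * E * δ) ^ 2 = 4 * E ^ 2 * (1 - s ^ 2) * δ ^ 2 := by ring
    _ ≤ 4 * E ^ 2 * (1 - s ^ 2) * (s ^ 2 * μ ^ 2) := by gcongr
    _ = s ^ 2 * (4 * E ^ 2 * ((1 - s ^ 2) * μ ^ 2)) := by ring
    _ ≤ s ^ 2 * (E ^ 2 + (1 - s ^ 2) * μ ^ 2) ^ 2 := by
        gcongr
        nlinarith [sq_nonneg (E ^ 2 - (1 - s ^ 2) * μ ^ 2)]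
    _ ≤ s ^ 2 * (E ^ 2 - δ ^ 2 + μ ^ 2) ^ 2 := by
        have hsum : E ^ 2 + (1 - s ^ 2) * μ ^ 2 ≤ E ^ 2 - δ ^ 2 + μ ^ 2 := by linarith
        gcongr s ^ 2 * ?_
        exact pow_le_pow_left₀ (by positivity) hsum 2

end Elementary

theorem sq_del_le_sq_norm_mul_sq_mu {n : ℕ} (m : ℝ) (v k : EuclideanSpace ℝ (Fin n)) :
    del v k ^ 2 ≤ ‖v‖ ^ 2 * mu m k ^ 2 := by
  have hmu : mu m k ^ 2 = ‖k‖ ^ 2 + m ^ 2 := Real.sq_sqrt (by positivity)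
  have hinner : |del v k| ≤ ‖k‖ * ‖v‖ := abs_real_inner_le_norm k v
  calc del v k ^ 2 = |del v k| ^ 2 := (sq_abs _).symm
    _ ≤ (‖k‖ * ‖v‖) ^ 2 := by gcongr
    _ ≤ ‖v‖ ^ 2 * mu m k ^ 2 := by rw [hmu]; nlinarith [sq_nonneg (‖v‖ * m)]

theorem stmt3_general (n : ℕ) (m : ℝ)
    (v : EuclideanSpace ℝ (Fin n)) (hv : ‖v‖ < 1)
    (E : ℝ) (k : EuclideanSpace ℝ (Fin n)) :
    Ktil m v E k ≤ ‖Dtil m v E k‖ ∧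
    ‖Dtil m v E k‖ ≤ (1 - ‖v‖ ^ 2) ^ (-(1 / 2 : ℝ)) * Ktil m v E k := by
  refine ⟨Complex.re_le_norm _, ?_⟩
  have hs : ‖v‖ ^ 2 < 1 := by nlinarith [norm_nonneg v]
  have ht : 0 < 1 - ‖v‖ ^ 2 := sub_pos.mpr hs
  have hδ := sq_del_le_sq_norm_mul_sq_mu m v k
  rw [Real.rpow_neg ht.le, ← Real.sqrt_eq_rpow, Ktil, Dtil, one_div]
  refine Complex.norm_inv_le_inv_mul_re_inv (Real.sqrt_pos.mpr ht) ?_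
  refine Complex.sqrt_mul_norm_le_re ht.le ?_ ?_
  · rw [Complex.re_ofReal_add_I_mul_sq_add_sq]
    exact sq_sub_sq_add_sq_nonneg hs.le hδ
  · rw [Complex.re_ofReal_add_I_mul_sq_add_sq, Complex.im_ofReal_add_I_mul_sq_add_sq,
      sub_sub_cancel]
    exact one_sub_sq_mul_sq_le hs.le hδ

/-- `K̃(E,k) ≤ |D̃(E,k)| ≤ (1 − ‖v‖²)^{−1/2} · K̃(E,k)`. -/
theorem stmt3 (n : ℕ) (hn : 1 ≤ n) (m : ℝ) (hm : 0 < m)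
    (v : EuclideanSpace ℝ (Fin n)) (hv : ‖v‖ < 1)
    (E : ℝ) (k : EuclideanSpace ℝ (Fin n)) :
    Ktil m v E k ≤ ‖Dtil m v E k‖ ∧
    ‖Dtil m v E k‖ ≤ (1 - ‖v‖ ^ 2) ^ (-(1 / 2 : ℝ)) * Ktil m v E k :=
  stmt3_general n m v hv E k

end
end

section
/- Let n ≥ 1, m > 0, and v ∈ ℝⁿ with ‖v‖ < 1. Then the range of the function k ↦ √(‖k‖² + m²) + ⟨k, v⟩ on ℝⁿ equals the closed half-line [m√(1 − ‖v‖²), ∞); in particular its infimum m√(1 − ‖v‖²) is attained. -/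
/-!
By Cauchy–Schwarz, `√(‖k‖² + m²) ≥ m√(1 − s²) + ‖k‖ s` with `s = ‖v‖`, while
`⟪k, v⟫ ≥ −‖k‖ s`; this gives the lower bound. Along the ray `k = r u` with `u` a unit vector
pointing against `v` the function becomes `√(r² + m²) − r s`, and the equation
`√(r² + m²) − r s = t` is a quadratic in `r` that is solvable exactly when `t ≥ m√(1 − s²)`.
-/

open Real
open scoped RealInnerProductSpace

namespace Real

theorem mul_sqrt_one_sub_sq_add_mul_le_sqrt (m x s : ℝ) (hs : s ^ 2 ≤ 1) :
    m * √(1 - s ^ 2) + x * s ≤ √(x ^ 2 + m ^ 2) := by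
  have hc : √(1 - s ^ 2) ^ 2 = 1 - s ^ 2 := sq_sqrt (by linarith)
  refine le_sqrt_of_sq_le ?_
  nlinarith [sq_nonneg (x * √(1 - s ^ 2) - m * s)]

theorem exists_sqrt_sq_add_sq_sub_mul_eq {m s t : ℝ} (hs0 : 0 ≤ s) (hs1 : s < 1) (ht0 : 0 ≤ t)
    (ht : m ^ 2 * (1 - s ^ 2) ≤ t ^ 2) : ∃ r : ℝ, √(r ^ 2 + m ^ 2) - r * s = t := by
  have hc : 0 < 1 - s ^ 2 := by nlinarith
  set d := √(t ^ 2 - m ^ 2 * (1 - s ^ 2))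
  have hd : d ^ 2 = t ^ 2 - m ^ 2 * (1 - s ^ 2) := sq_sqrt (by linarith)
  -- the nonnegative root of `(1 - s²) r² - 2 t s r + m² - t² = 0`
  set r := (t * s + d) / (1 - s ^ 2)
  have hr : (t + r * s) ^ 2 = r ^ 2 + m ^ 2 := by
    simp only [r]
    field_simp
    linear_combination (-(1 - s ^ 2)) * hd
  refine ⟨r, ?_⟩
  have : 0 ≤ t + r * s := by positivity
  rw [← hr, sqrt_sq this]
  ring

end Real

section InnerProductSpace

variable {E : Type*} [NormedAddCommGroup E] [InnerProductSpace ℝ E]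

theorem exists_norm_eq_one_inner_eq_neg_norm [Nontrivial E] (v : E) :
    ∃ u : E, ‖u‖ = 1 ∧ ⟪u, v⟫ = -‖v‖ := by
  rcases eq_or_ne v 0 with rfl | hv
  · simpa using exists_norm_eq E zero_le_one
  · refine ⟨-(‖v‖⁻¹ • v), ?_, ?_⟩
    · rw [norm_neg, norm_smul, norm_inv, norm_norm, inv_mul_cancel₀ (norm_ne_zero_iff.2 hv)]
    · rw [inner_neg_left, real_inner_smul_left, real_inner_self_eq_norm_sq]
      field_simp

theorem range_sqrt_norm_sq_add_sq_add_inner [Nontrivial E] {m : ℝ} (hm : 0 < m) {v : E}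
    (hv : ‖v‖ < 1) :
    Set.range (fun k : E => √(‖k‖ ^ 2 + m ^ 2) + ⟪k, v⟫) = Set.Ici (m * √(1 - ‖v‖ ^ 2)) := by
  have hv2 : ‖v‖ ^ 2 ≤ 1 := by nlinarith [norm_nonneg v]
  ext t
  constructor
  · rintro ⟨k, rfl⟩
    have := neg_le_of_abs_le (abs_real_inner_le_norm k v)
    have := mul_sqrt_one_sub_sq_add_mul_le_sqrt m ‖k‖ ‖v‖ hv2
    exact Set.mem_Ici.2 (by linarith)
  · intro ht
    have hM : 0 ≤ m * √(1 - ‖v‖ ^ 2) := by positivity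
    have ht2 : m ^ 2 * (1 - ‖v‖ ^ 2) ≤ t ^ 2 := by
      have := pow_le_pow_left₀ hM (Set.mem_Ici.1 ht) 2
      rwa [mul_pow, sq_sqrt (by linarith)] at this
    obtain ⟨r, hr⟩ := exists_sqrt_sq_add_sq_sub_mul_eq (norm_nonneg v) hv
      (hM.trans (Set.mem_Ici.1 ht)) ht2
    obtain ⟨u, hu, huv⟩ := exists_norm_eq_one_inner_eq_neg_norm v
    refine ⟨r • u, ?_⟩
    simp only [norm_smul, hu, mul_one, norm_eq_abs, sq_abs, real_inner_smul_left, huv]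
    linarith

end InnerProductSpace

/-- The range of `k ↦ √(‖k‖² + m²) + ⟨k,v⟩` on `ℝⁿ` equals the closed
half-line `[m√(1 − ‖v‖²), ∞)`; in particular the infimum `m√(1 − ‖v‖²)` is attained. -/
theorem stmt11 (n : ℕ) (hn : 1 ≤ n) (m : ℝ) (hm : 0 < m)
    (v : EuclideanSpace ℝ (Fin n)) (hv : ‖v‖ < 1) :
    Set.range (fun k : EuclideanSpace ℝ (Fin n) => Real.sqrt (‖k‖ ^ 2 + m ^ 2) + ⟪k, v⟫)
      = Set.Ici (m * Real.sqrt (1 - ‖v‖ ^ 2)) := by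
  have : NeZero n := ⟨by omega⟩
  exact range_sqrt_norm_sq_add_sq_add_inner hm hv
end

section
/- Let H be a complex Hilbert space and let A, B, C be bounded linear operators on H such that A, B, and C are self-adjoint and C commutes with both A and B. Then ‖C · exp(A + B)‖ ≤ ‖exp A‖ · ‖C · exp B‖, where exp denotes the operator exponential and ‖·‖ the operator norm. -/
/-!
For selfadjoint `a` one has `‖exp a‖ = exp (max σ(a))`, and `max σ` is subadditive, so
`‖exp (a + b)‖ ≤ ‖exp a‖ * ‖exp b‖` with no commutation assumption on `a` and `b`. A strictly
positive `p` commuting with `a` and `b` equals `exp (log p)`, where `log p` still commutes with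
them, so `p` can be absorbed into the exponent of `b`; a nonnegative `p` is the limit of `p + ε`.
The theorem is this inequality for `p = C²`, `a = 2A`, `b = 2B`, since by the C⋆-identity
`‖C exp X‖² = ‖C² exp (2X)‖` for commuting selfadjoint `C` and `X`.
-/

open NormedSpace

section

variable {A : Type*} [CStarAlgebra A]

lemma real_exp_le_norm_exp_of_mem_spectrum {a : A} (ha : IsSelfAdjoint a) {x : ℝ}
    (hx : x ∈ spectrum ℝ a) : Real.exp x ≤ ‖exp a‖ := by
  rw [← CFC.real_exp_eq_normedSpace_exp ha]
  simpa [Real.norm_of_nonneg (Real.exp_pos x).le] using norm_apply_le_norm_cfc Real.exp a hx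

lemma norm_exp_le_of_spectrum_le {a : A} (ha : IsSelfAdjoint a) {r : ℝ}
    (hr : ∀ x ∈ spectrum ℝ a, x ≤ r) : ‖exp a‖ ≤ Real.exp r := by
  rw [← CFC.real_exp_eq_normedSpace_exp ha]
  refine norm_cfc_le (Real.exp_pos r).le fun x hx => ?_
  rw [Real.norm_of_nonneg (Real.exp_pos x).le]
  exact Real.exp_le_exp.mpr (hr x hx)

lemma sq_norm_mul_exp {c y : A} (hc : IsSelfAdjoint c) (hy : IsSelfAdjoint y)
    (hcy : Commute c y) : ‖c * exp y‖ ^ 2 = ‖c * c * exp (y + y)‖ := by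
  let +nondep : NormedAlgebra ℚ A := .restrictScalars ℚ ℂ A
  have hsa : IsSelfAdjoint (c * exp y) :=
    (IsSelfAdjoint.commute_iff hc hy.exp).mp hcy.exp_right
  rw [← hsa.norm_mul_self, exp_add_of_commute (Commute.refl y),
    hcy.exp_right.symm.mul_mul_mul_comm]

lemma sq_norm_exp {a : A} (ha : IsSelfAdjoint a) : ‖exp a‖ ^ 2 = ‖exp (a + a)‖ := by
  simpa using sq_norm_mul_exp (.one A) ha (.one_left a)

variable [PartialOrder A] [StarOrderedRing A]

lemma norm_exp_add_le_of_isSelfAdjoint {a b : A} (ha : IsSelfAdjoint a) (hb : IsSelfAdjoint b) :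
    ‖exp (a + b)‖ ≤ ‖exp a‖ * ‖exp b‖ := by
  cases subsingleton_or_nontrivial A
  · simp only [Subsingleton.elim (exp (a + b)) 0, norm_zero]
    positivity
  obtain ⟨r, hra, har⟩ := (ContinuousFunctionalCalculus.isCompact_spectrum (R := ℝ) a)
    |>.exists_isGreatest (ContinuousFunctionalCalculus.spectrum_nonempty a ha)
  obtain ⟨s, hsb, hbs⟩ := (ContinuousFunctionalCalculus.isCompact_spectrum (R := ℝ) b)
    |>.exists_isGreatest (ContinuousFunctionalCalculus.spectrum_nonempty b hb)
  have hab : a + b ≤ algebraMap ℝ A (r + s) := by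
    rw [map_add]
    exact add_le_add ((le_algebraMap_iff_spectrum_le ha).mpr har)
      ((le_algebraMap_iff_spectrum_le hb).mpr hbs)
  calc ‖exp (a + b)‖ ≤ Real.exp (r + s) :=
        norm_exp_le_of_spectrum_le (ha.add hb)
          ((le_algebraMap_iff_spectrum_le (ha.add hb)).mp hab)
    _ = Real.exp r * Real.exp s := Real.exp_add r s
    _ ≤ ‖exp a‖ * ‖exp b‖ := by
        gcongr
        · exact real_exp_le_norm_exp_of_mem_spectrum ha hra
        · exact real_exp_le_norm_exp_of_mem_spectrum hb hsb

lemma norm_mul_exp_add_le_of_isStrictlyPositive {p a b : A} (hp : IsStrictlyPositive p)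
    (ha : IsSelfAdjoint a) (hb : IsSelfAdjoint b) (hpa : Commute p a) (hpb : Commute p b) :
    ‖p * exp (a + b)‖ ≤ ‖exp a‖ * ‖p * exp b‖ := by
  let +nondep : NormedAlgebra ℚ A := .restrictScalars ℚ ℂ A
  have hla : Commute (CFC.log p) a := hpa.cfc_real Real.log
  have hlb : Commute (CFC.log p) b := hpb.cfc_real Real.log
  have hexp : ∀ {c : A}, Commute (CFC.log p) c → p * exp c = exp (CFC.log p + c) := fun hc => by
    rw [exp_add_of_commute hc, CFC.exp_log p]
  rw [hexp (hla.add_right hlb), hexp hlb, add_left_comm]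
  exact norm_exp_add_le_of_isSelfAdjoint ha (IsSelfAdjoint.log.add hb)

lemma norm_mul_exp_add_le_of_nonneg {p a b : A} (hp : 0 ≤ p)
    (ha : IsSelfAdjoint a) (hb : IsSelfAdjoint b) (hpa : Commute p a) (hpb : Commute p b) :
    ‖p * exp (a + b)‖ ≤ ‖exp a‖ * ‖p * exp b‖ := by
  have hlim : ∀ x : A, Filter.Tendsto (fun ε : ℝ => ‖(p + algebraMap ℝ A ε) * x‖)
      (nhdsWithin 0 (Set.Ioi 0)) (nhds ‖p * x‖) := fun x => by
    have : Continuous fun ε : ℝ => ‖(p + algebraMap ℝ A ε) * x‖ := by fun_prop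
    simpa using (this.tendsto 0).mono_left nhdsWithin_le_nhds
  refine le_of_tendsto_of_tendsto (hlim _) ((hlim _).const_mul _) ?_
  filter_upwards [self_mem_nhdsWithin] with ε hε
  exact norm_mul_exp_add_le_of_isStrictlyPositive
    (.nonneg_add hp (isStrictlyPositive_algebraMap hε)) ha hb
    (hpa.add_left (Algebra.commute_algebraMap_left ε a))
    (hpb.add_left (Algebra.commute_algebraMap_left ε b))

end

/-- For bounded self-adjoint operators `A, B, C` on a complex Hilbert
space with `C` commuting with `A` and `B`:
`‖C·exp(A+B)‖ ≤ ‖exp A‖ · ‖C·exp B‖`. -/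
theorem stmt12 {H : Type*} [NormedAddCommGroup H] [InnerProductSpace ℂ H] [CompleteSpace H]
    (A B C : H →L[ℂ] H)
    (hA : IsSelfAdjoint A) (hB : IsSelfAdjoint B) (hC : IsSelfAdjoint C)
    (hCA : Commute C A) (hCB : Commute C B) :
    ‖C * NormedSpace.exp (A + B)‖ ≤ ‖NormedSpace.exp A‖ * ‖C * NormedSpace.exp B‖ := by
  have hsq : ‖C * exp (A + B)‖ ^ 2 ≤ (‖exp A‖ * ‖C * exp B‖) ^ 2 :=
    calc ‖C * exp (A + B)‖ ^ 2 = ‖C * C * exp ((A + A) + (B + B))‖ := by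
          rw [sq_norm_mul_exp hC (hA.add hB) (hCA.add_right hCB), add_add_add_comm]
      _ ≤ ‖exp (A + A)‖ * ‖C * C * exp (B + B)‖ :=
          norm_mul_exp_add_le_of_nonneg hC.mul_self_nonneg (hA.add hA) (hB.add hB)
            ((hCA.mul_left hCA).add_right (hCA.mul_left hCA))
            ((hCB.mul_left hCB).add_right (hCB.mul_left hCB))
      _ = (‖exp A‖ * ‖C * exp B‖) ^ 2 := by
          rw [mul_pow, sq_norm_exp hA, sq_norm_mul_exp hC hB hCB]
  exact (pow_le_pow_iff_left₀ (norm_nonneg _) (by positivity) two_ne_zero).mp hsq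
end

section
/- Let μ, δ, β be real numbers with β > 0 and |δ| < μ, let n ∈ ℤ, and set E = 2πn/β. Then ∫₀^β (1/(2μ)) · ( e^{−ξ(μ−δ)}/(1 − e^{−β(μ−δ)}) + e^{−(β−ξ)(μ+δ)}/(1 − e^{−β(μ+δ)}) ) · e^{−iEξ} dξ = 1/((E + iδ)² + μ²). -/
open Real MeasureTheory intervalIntegral

/-!
Split the integrand into its two exponentials. Since `e^{-iEβ} = 1` at a Matsubara frequency,
`∫₀^β e^{-(a + iE)ξ} dξ = (1 - e^{-aβ}) / (a + iE)`, so the first summand contributes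
`1/(μ - δ + iE)`; the substitution `ξ ↦ β - ξ` turns the second into the first with `E ↦ -E`,
contributing `1/(μ + δ - iE)`. Partial fractions then give
`(1/2μ) (1/(μ - δ + iE) + 1/(μ + δ - iE)) = 1/(μ² - (δ - iE)²) = 1/((E + iδ)² + μ²)`.
-/

namespace Matsubara

open Complex

lemma cexp_I_mul_two_pi_int_div_mul_eq_one {β : ℝ} (hβ : β ≠ 0) (n : ℤ) :
    Complex.exp (I * (2 * π * n / β : ℝ) * β) = 1 := by
  have : (β : ℂ) ≠ 0 := ofReal_ne_zero.mpr hβ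
  rw [Complex.exp_eq_one_iff]
  exact ⟨n, by push_cast; field_simp⟩

lemma ofReal_add_I_mul_ne_zero {a : ℝ} (ha : a ≠ 0) (E : ℝ) : (a : ℂ) + I * E ≠ 0 :=
  fun h => ha (by simpa using congrArg Complex.re h)

section Integrals

variable {a β E : ℝ}

theorem integral_exp_div_one_sub_exp_mul_cexp (ha : a ≠ 0) (hβ : β ≠ 0)
    (hE : Complex.exp (I * E * β) = 1) :
    ∫ ξ in (0 : ℝ)..β, ((Real.exp (-ξ * a) / (1 - Real.exp (-β * a)) : ℝ) : ℂ) *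
        Complex.exp (-I * E * ξ) = 1 / (a + I * E) := by
  set z : ℂ := a + I * E
  set c : ℂ := ((1 - Real.exp (-β * a) : ℝ) : ℂ)
  have hz : -z ≠ 0 := neg_ne_zero.mpr (ofReal_add_I_mul_ne_zero ha E)
  have hc : c ≠ 0 := by
    rw [ofReal_ne_zero, sub_ne_zero, ne_comm, Ne, Real.exp_eq_one_iff]
    exact mul_ne_zero (neg_ne_zero.mpr hβ) ha
  have hintegrand : ∀ ξ : ℝ, ((Real.exp (-ξ * a) / (1 - Real.exp (-β * a)) : ℝ) : ℂ) *
      Complex.exp (-I * E * ξ) = c⁻¹ * Complex.exp (-z * ξ) := by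
    intro ξ
    rw [ofReal_div, ofReal_exp, div_eq_inv_mul, mul_assoc, ← Complex.exp_add]
    congr 2
    push_cast
    ring
  -- `e^{-iEβ} = 1`, so the boundary term at `β` is the real number `e^{-βa}`
  have hend : Complex.exp (-z * β) - Complex.exp (-z * (0 : ℝ)) = -c := by
    have : -z * β = (-β * a : ℝ) + -(I * E * β) := by push_cast; ring
    rw [this, Complex.exp_add, Complex.exp_neg, hE, inv_one, mul_one, ofReal_zero, mul_zero,
      Complex.exp_zero, ← ofReal_exp]
    push_cast [c]
    ring
  rw [integral_congr fun ξ _ => hintegrand ξ, intervalIntegral.integral_const_mul,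
    integral_exp_mul_complex hz, hend, neg_div_neg_eq, ← mul_div_assoc, inv_mul_cancel₀ hc]

theorem integral_exp_sub_div_one_sub_exp_mul_cexp (ha : a ≠ 0) (hβ : β ≠ 0)
    (hE : Complex.exp (I * E * β) = 1) :
    ∫ ξ in (0 : ℝ)..β, ((Real.exp (-(β - ξ) * a) / (1 - Real.exp (-β * a)) : ℝ) : ℂ) *
        Complex.exp (-I * E * ξ) = 1 / (a - I * E) := by
  have hE' : Complex.exp (I * (-E : ℝ) * β) = 1 := by
    rw [ofReal_neg, mul_neg, neg_mul, Complex.exp_neg, hE, inv_one]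
  have hreflect : ∀ ξ : ℝ, Complex.exp (-I * E * ξ) =
      Complex.exp (-I * (-E : ℝ) * (β - ξ : ℝ)) := by
    intro ξ
    have : -I * (-E : ℝ) * (β - ξ : ℝ) = -I * E * ξ + I * E * β := by push_cast; ring
    rw [this, Complex.exp_add, hE, mul_one]
  simp only [hreflect]
  rw [integral_comp_sub_left (fun η : ℝ =>
      ((Real.exp (-η * a) / (1 - Real.exp (-β * a)) : ℝ) : ℂ) * Complex.exp (-I * (-E : ℝ) * η)),
    sub_zero, sub_self, integral_exp_div_one_sub_exp_mul_cexp ha hβ hE', ofReal_neg, mul_neg,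
    sub_eq_add_neg]

end Integrals

theorem one_div_add_I_mul_sq_add_sq {μ δ : ℝ} (hμ : μ ≠ 0) (hsub : μ - δ ≠ 0)
    (hadd : μ + δ ≠ 0) (E : ℝ) :
    1 / (((E : ℂ) + I * δ) ^ 2 + (μ : ℂ) ^ 2) =
      (1 / (2 * μ) : ℂ) * (1 / ((μ - δ : ℝ) + I * E) + 1 / ((μ + δ : ℝ) - I * E)) := by
  have h₁ := ofReal_add_I_mul_ne_zero hsub E
  have h₂ := ofReal_add_I_mul_ne_zero hadd (-E)
  have hμ' : (μ : ℂ) ≠ 0 := ofReal_ne_zero.mpr hμ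
  rw [ofReal_neg, mul_neg, ← sub_eq_add_neg] at h₂
  push_cast at h₁ h₂ ⊢
  have hprod : ((E : ℂ) + I * δ) ^ 2 + (μ : ℂ) ^ 2 = (μ - δ + I * E) * (μ + δ - I * E) := by
    linear_combination (E ^ 2 + δ ^ 2 : ℂ) * I_sq
  rw [hprod]
  field_simp
  ring

end Matsubara

open Matsubara in
/-- Fourier coefficient of the β-periodized covariance at the Matsubara
frequency `E = 2πn/β`:
`∫₀^β (1/(2μ))(e^{−ξ(μ−δ)}/(1−e^{−β(μ−δ)}) + e^{−(β−ξ)(μ+δ)}/(1−e^{−β(μ+δ)})) e^{−iEξ} dξ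
  = 1/((E + iδ)² + μ²)`. -/
theorem stmt15 (μ δ β : ℝ) (hβ : 0 < β) (hδ : |δ| < μ) (n : ℤ) (E : ℝ)
    (hE : E = 2 * π * n / β) :
    ∫ ξ in (0 : ℝ)..β,
        (((1 / (2 * μ)) *
          (Real.exp (-ξ * (μ - δ)) / (1 - Real.exp (-β * (μ - δ))) +
            Real.exp (-(β - ξ) * (μ + δ)) / (1 - Real.exp (-β * (μ + δ)))) : ℝ) : ℂ) *
          Complex.exp (-Complex.I * E * ξ)
      = 1 / (((E : ℂ) + Complex.I * δ) ^ 2 + (μ : ℂ) ^ 2) := by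
  obtain ⟨hδ₁, hδ₂⟩ := abs_lt.mp hδ
  have hsub : μ - δ ≠ 0 := by linarith
  have hadd : μ + δ ≠ 0 := by linarith
  have hper : Complex.exp (Complex.I * E * β) = 1 :=
    hE ▸ cexp_I_mul_two_pi_int_div_mul_eq_one hβ.ne' n
  simp_rw [Complex.ofReal_mul, Complex.ofReal_add, mul_assoc ((1 / (2 * μ) : ℝ) : ℂ), add_mul]
  rw [intervalIntegral.integral_const_mul,
    integral_add (Continuous.intervalIntegrable (by fun_prop) _ _)
      (Continuous.intervalIntegrable (by fun_prop) _ _),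
    integral_exp_div_one_sub_exp_mul_cexp hsub hβ.ne' hper,
    integral_exp_sub_div_one_sub_exp_mul_cexp hadd hβ.ne' hper,
    one_div_add_I_mul_sq_add_sq (by linarith) hsub hadd E]
  push_cast
  ring
end

section
/- Single-mode reflection positivity of the periodized covariance: let a > 0, a' > 0, β > 0, and let f : [0, β/2] → ℂ be continuous. Then the double integral ∫₀^{β/2} ∫₀^{β/2} conj(f(t)) · ( e^{−(t+t')a}/(1 − e^{−βa}) + e^{(t+t'−β)a'}/(1 − e^{−βa'}) ) · f(t') dt dt' is real and nonnegative; indeed it equals (1 + ρ_a)·|∫₀^{β/2} e^{−ta} f(t) dt|² + ρ_{a'}·|∫₀^{β/2} e^{ta'} f(t) dt|², where ρ_c = e^{−βc}/(1 − e^{−βc}). -/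
/-!
Since `e^{(t+t'-β)a'} = e^{-βa'} e^{ta'} e^{t'a'}` and `1/(1 - e^{-βa}) = 1 + ρ_a`, the kernel
is `(1 + ρ_a) e^{-ta} e^{-t'a} + ρ_{a'} e^{ta'} e^{t'a'}`, a nonnegative combination of rank-one
kernels `u(t) u(t')` with `u` real. Each of them integrates against `conj f ⊗ f` to
`conj (∫ u f) · ∫ u f = ‖∫ u f‖²`.
-/

open MeasureTheory
open scoped ComplexConjugate

theorem IntervalIntegrable.conj {g : ℝ → ℂ} {a b : ℝ}
    (hg : IntervalIntegrable g volume a b) :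
    IntervalIntegrable (fun t => conj (g t)) volume a b :=
  hg.mono_fun hg.def'.aestronglyMeasurable.star (.of_forall fun _ => by simp)

namespace PeriodizedCovariance

theorem intervalIntegral_integral_sum_ofReal_mul_conj_mul {ι : Type*} (s : Finset ι)
    (c : ι → ℝ) (g : ι → ℝ → ℂ) {a b : ℝ} (hg : ∀ i ∈ s, IntervalIntegrable (g i) volume a b) :
    ∫ t in a..b, ∫ t' in a..b, ∑ i ∈ s, (c i : ℂ) * (conj (g i t) * g i t') =
      ((∑ i ∈ s, c i * ‖∫ t in a..b, g i t‖ ^ 2 : ℝ) : ℂ) := by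
  calc _ = ∫ t in a..b, ∑ i ∈ s, (c i : ℂ) * (conj (g i t) * ∫ t' in a..b, g i t') := by
        refine intervalIntegral.integral_congr fun t _ => ?_
        rw [intervalIntegral.integral_finsetSum fun i hi => ((hg i hi).const_mul _).const_mul _]
        simp only [intervalIntegral.integral_const_mul]
    _ = ∑ i ∈ s, (c i : ℂ) * (conj (∫ t in a..b, g i t) * ∫ t in a..b, g i t) := by
        rw [intervalIntegral.integral_finsetSum fun i hi =>
          ((hg i hi).conj.mul_const _).const_mul _]
        simp only [intervalIntegral.integral_const_mul, intervalIntegral.integral_mul_const,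
          intervalIntegral.intervalIntegral_conj]
    _ = _ := by
        push_cast
        simp only [Complex.conj_mul']

/-- The Bose–Einstein occupation number `ρ_c` at inverse temperature `β`. -/
noncomputable def bose (β c : ℝ) : ℝ := Real.exp (-β * c) / (1 - Real.exp (-β * c))

theorem one_add_bose {β c : ℝ} (h : β * c ≠ 0) :
    1 + bose β c = 1 / (1 - Real.exp (-β * c)) := by
  have : 1 - Real.exp (-β * c) ≠ 0 := by
    rw [sub_ne_zero, ne_comm, Ne, Real.exp_eq_one_iff]
    simpa using h
  rw [bose, add_div' _ _ _ this]
  ring_nf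

theorem bose_nonneg {β c : ℝ} (h : 0 ≤ β * c) : 0 ≤ bose β c :=
  div_nonneg (Real.exp_nonneg _) (sub_nonneg.2 (Real.exp_le_one_iff.2 (by linarith)))

theorem periodizedKernel_eq {a a' β : ℝ} (h : β * a ≠ 0) (t t' : ℝ) :
    Real.exp (-(t + t') * a) / (1 - Real.exp (-β * a)) +
        Real.exp ((t + t' - β) * a') / (1 - Real.exp (-β * a')) =
      (1 + bose β a) * (Real.exp (-(t * a)) * Real.exp (-(t' * a))) +
        bose β a' * (Real.exp (t * a') * Real.exp (t' * a')) := by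
  have hdecay : Real.exp (-(t + t') * a) = Real.exp (-(t * a)) * Real.exp (-(t' * a)) := by
    rw [← Real.exp_add]
    ring_nf
  have hgrowth : Real.exp ((t + t' - β) * a') =
      Real.exp (-β * a') * (Real.exp (t * a') * Real.exp (t' * a')) := by
    rw [← Real.exp_add, ← Real.exp_add]
    ring_nf
  rw [one_add_bose h, bose, hdecay, hgrowth]
  ring

theorem im_eq_zero_and_re_nonneg_of_eq_ofReal {z : ℂ} {r : ℝ} (hr : 0 ≤ r) (h : z = r) :
    z.im = 0 ∧ 0 ≤ z.re ∧ z = r := by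
  subst h
  exact ⟨Complex.ofReal_im r, by rwa [Complex.ofReal_re], rfl⟩

end PeriodizedCovariance

open PeriodizedCovariance in
/-- Single-mode reflection positivity of the periodized covariance: for
`a, a' > 0`, `β > 0` and `f` continuous on `[0, β/2]`, the double integral
`∫₀^{β/2}∫₀^{β/2} conj(f(t))·(e^{−(t+t')a}/(1−e^{−βa}) + e^{(t+t'−β)a'}/(1−e^{−βa'}))·f(t') dt dt'`
is real and nonnegative: it equals `(1+ρ_a)|∫₀^{β/2} e^{−ta}f(t)dt|² + ρ_{a'}|∫₀^{β/2} e^{ta'}f(t)dt|²`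
with `ρ_c = e^{−βc}/(1 − e^{−βc})`. -/
theorem stmt17 (a a' β : ℝ) (ha : 0 < a) (ha' : 0 < a') (hβ : 0 < β)
    (f : ℝ → ℂ) (hf : ContinuousOn f (Set.Icc 0 (β / 2))) :
    (∫ t in (0 : ℝ)..(β / 2), ∫ t' in (0 : ℝ)..(β / 2),
        conj (f t) *
          (((Real.exp (-(t + t') * a) / (1 - Real.exp (-β * a)) +
            Real.exp ((t + t' - β) * a') / (1 - Real.exp (-β * a'))) : ℝ) : ℂ) * f t').im = 0 ∧
    0 ≤ (∫ t in (0 : ℝ)..(β / 2), ∫ t' in (0 : ℝ)..(β / 2),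
        conj (f t) *
          (((Real.exp (-(t + t') * a) / (1 - Real.exp (-β * a)) +
            Real.exp ((t + t' - β) * a') / (1 - Real.exp (-β * a'))) : ℝ) : ℂ) * f t').re ∧
    (∫ t in (0 : ℝ)..(β / 2), ∫ t' in (0 : ℝ)..(β / 2),
        conj (f t) *
          (((Real.exp (-(t + t') * a) / (1 - Real.exp (-β * a)) +
            Real.exp ((t + t' - β) * a') / (1 - Real.exp (-β * a'))) : ℝ) : ℂ) * f t')
      = (((1 + Real.exp (-β * a) / (1 - Real.exp (-β * a))) *
            ‖∫ t in (0 : ℝ)..(β / 2), Complex.exp (-(t * a) : ℝ) * f t‖ ^ 2 +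
          (Real.exp (-β * a') / (1 - Real.exp (-β * a'))) *
            ‖∫ t in (0 : ℝ)..(β / 2), Complex.exp ((t * a' : ℝ)) * f t‖ ^ 2
          : ℝ) : ℂ) := by
  let c : Fin 2 → ℝ := ![1 + bose β a, bose β a']
  let g : Fin 2 → ℝ → ℂ := ![fun t => Complex.exp (-(t * a) : ℝ) * f t,
    fun t => Complex.exp ((t * a' : ℝ)) * f t]
  have hfi : IntervalIntegrable f volume 0 (β / 2) := hf.intervalIntegrable_of_Icc (by positivity)
  have hg : ∀ i ∈ Finset.univ, IntervalIntegrable (g i) volume 0 (β / 2) := by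
    intro i _
    fin_cases i <;> exact hfi.continuousOn_mul (by fun_prop)
  have hK : ∀ t t' : ℝ, conj (f t) *
      (((Real.exp (-(t + t') * a) / (1 - Real.exp (-β * a)) +
        Real.exp ((t + t' - β) * a') / (1 - Real.exp (-β * a'))) : ℝ) : ℂ) * f t' =
      ∑ i, (c i : ℂ) * (conj (g i t) * g i t') := by
    intro t t'
    rw [periodizedKernel_eq (by positivity)]
    simp only [c, g, Fin.sum_univ_two, Matrix.cons_val_zero, Matrix.cons_val_one,
      ← Complex.ofReal_exp, map_mul, Complex.conj_ofReal]
    push_cast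
    ring
  have hρ : 0 ≤ bose β a := bose_nonneg (by positivity)
  have hρ' : 0 ≤ bose β a' := bose_nonneg (by positivity)
  refine im_eq_zero_and_re_nonneg_of_eq_ofReal
    (add_nonneg (mul_nonneg (add_nonneg zero_le_one hρ) (sq_nonneg _))
      (mul_nonneg hρ' (sq_nonneg _))) ?_
  simp_rw [hK]
  rw [intervalIntegral_integral_sum_ofReal_mul_conj_mul _ c g hg, Fin.sum_univ_two]
  rfl
end
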